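/- arXiv:2108.07458 — 4 statements merged into one kernel-verified Lean document; each statement's English description precedes it below -/
import Mathlib

section
/- Let R be a UFD with fraction field K, S ⊆ R, π an irreducible of R, and let {b_i}_{i≥0} ⊆ S be a π-sequence, i.e., for each k > 0 the polynomial (x−b₀)⋯(x−b_{k−1})/((b_k−b₀)⋯(b_k−b_{k−1})) lies in Int(S, R_{(π)}). If f ∈ K[x] has degree ≤ k, write f = Σ_{i=0}^{k} c_i · (x−b₀)⋯(x−b_{i−1})/((b_i−b₀)⋯(b_i−b_{i−1})) with c_i ∈ K. Then f ∈ Int(S, R_{(π)}) if and only if f(b_i) ∈ R_{(π)} for all 0 ≤ i ≤ k, which in turn holds iff all c_i ∈ R_{(π)}. -/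
open Finset

/-- `x ∈ K` lies in the localization R_(π) of R at the prime ideal (π): it can be
written with a denominator not divisible by π. -/
def InLocAt {R K : Type} [CommRing R] [Field K] [Algebra R K] (π : R) (x : K) : Prop :=
  ∃ r s : R, ¬ π ∣ s ∧ x * algebraMap R K s = algebraMap R K r

open Polynomial

/-! Writing `β_i` for the image of `b_i` in `K`, the Newton basis polynomial `N_j` vanishes at
`β_i` for `i < j` and equals `1` at `β_j`. Hence `f(β_i) = c_i + ∑_{j<i} c_j N_j(β_i)`, a
unitriangular system. The π-sequence condition says `N_j(S) ⊆ R_(π)`, and `R_(π)` is a subring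
of `K` because `π` is prime. So integral coefficients give integral values on all of `S`, and
integral values at `β_0, …, β_k` give integral coefficients by induction on `i`. -/

section LocalSubring

variable {R K : Type} [CommRing R] [Field K] [Algebra R K] {π : R}

def inLocAtSubring (hπ : Prime π) : Subring K where
  carrier := {x | InLocAt π x}
  zero_mem' := ⟨0, 1, hπ.not_dvd_one, by simp⟩
  one_mem' := ⟨1, 1, hπ.not_dvd_one, by simp⟩
  add_mem' := by
    rintro x y ⟨r₁, s₁, hs₁, he₁⟩ ⟨r₂, s₂, hs₂, he₂⟩
    refine ⟨r₁ * s₂ + r₂ * s₁, s₁ * s₂, fun h => (hπ.dvd_or_dvd h).elim hs₁ hs₂, ?_⟩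
    simp only [map_mul, map_add]
    linear_combination algebraMap R K s₂ * he₁ + algebraMap R K s₁ * he₂
  mul_mem' := by
    rintro x y ⟨r₁, s₁, hs₁, he₁⟩ ⟨r₂, s₂, hs₂, he₂⟩
    refine ⟨r₁ * r₂, s₁ * s₂, fun h => (hπ.dvd_or_dvd h).elim hs₁ hs₂, ?_⟩
    simp only [map_mul]
    linear_combination (y * algebraMap R K s₂) * he₁ + algebraMap R K r₁ * he₂
  neg_mem' := by
    rintro x ⟨r, s, hs, he⟩
    exact ⟨-r, s, hs, by rw [map_neg, neg_mul, he]⟩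

theorem mem_inLocAtSubring (hπ : Prime π) {x : K} : x ∈ inLocAtSubring hπ ↔ InLocAt π x :=
  Iff.rfl

end LocalSubring

section NewtonBasis

variable {K : Type} [Field K] (β : ℕ → K)

noncomputable def newtonBasis (j : ℕ) : K[X] :=
  C (∏ i ∈ range j, (β j - β i))⁻¹ * ∏ i ∈ range j, (X - C (β i))

theorem eval_newtonBasis (j : ℕ) (a : K) :
    (newtonBasis β j).eval a = (∏ i ∈ range j, (β j - β i))⁻¹ * ∏ i ∈ range j, (a - β i) := by
  simp [newtonBasis, eval_prod]

theorem eval_newtonBasis_of_lt {i j : ℕ} (hij : i < j) : (newtonBasis β j).eval (β i) = 0 := by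
  rw [eval_newtonBasis]
  exact mul_eq_zero_of_right _ (prod_eq_zero (mem_range.2 hij) (sub_self _))

variable {β}

theorem eval_newtonBasis_self (hβ : Function.Injective β) (j : ℕ) :
    (newtonBasis β j).eval (β j) = 1 := by
  have hne : ∏ i ∈ range j, (β j - β i) ≠ 0 :=
    prod_ne_zero_iff.2 fun i hi => sub_ne_zero.2 (hβ.ne (mem_range.1 hi).ne')
  rw [eval_newtonBasis, inv_mul_cancel₀ hne]

theorem eval_sum_newtonBasis_node (hβ : Function.Injective β) (c : ℕ → K) {i k : ℕ}
    (hik : i ≤ k) :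
    (∑ j ∈ range (k + 1), C (c j) * newtonBasis β j).eval (β i) =
      ∑ j ∈ range i, c j * (newtonBasis β j).eval (β i) + c i := by
  have hvanish : ∑ j ∈ Ico (i + 1) (k + 1), c j * (newtonBasis β j).eval (β i) = 0 :=
    sum_eq_zero fun j hj => by
      rw [eval_newtonBasis_of_lt β (mem_Ico.1 hj).1, mul_zero]
  simp only [eval_finsetSum, eval_mul, eval_C]
  rw [← sum_range_add_sum_Ico _ (by omega : i + 1 ≤ k + 1), hvanish, add_zero,
    sum_range_succ, eval_newtonBasis_self hβ, mul_one]

variable (A : Subring K)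

theorem eval_sum_newtonBasis_mem {c : ℕ → K} {k : ℕ} {a : K}
    (hN : ∀ j ≤ k, (newtonBasis β j).eval a ∈ A) (hc : ∀ j ≤ k, c j ∈ A) :
    (∑ j ∈ range (k + 1), C (c j) * newtonBasis β j).eval a ∈ A := by
  simp only [eval_finsetSum, eval_mul, eval_C]
  refine A.sum_mem fun j hj => ?_
  have hjk := Nat.lt_succ_iff.1 (mem_range.1 hj)
  exact A.mul_mem (hc j hjk) (hN j hjk)

theorem coeff_mem_of_eval_node_mem (hβ : Function.Injective β) {c : ℕ → K} {k : ℕ}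
    (hN : ∀ i j, j < i → (newtonBasis β j).eval (β i) ∈ A)
    (hv : ∀ i ≤ k, (∑ j ∈ range (k + 1), C (c j) * newtonBasis β j).eval (β i) ∈ A) :
    ∀ j ≤ k, c j ∈ A := by
  intro i
  induction i using Nat.strong_induction_on with
  | _ i ih =>
    intro hik
    have hci : c i = (∑ j ∈ range (k + 1), C (c j) * newtonBasis β j).eval (β i) -
        ∑ j ∈ range i, c j * (newtonBasis β j).eval (β i) := by
      rw [eval_sum_newtonBasis_node hβ c hik]; ring
    rw [hci]
    refine A.sub_mem (hv i hik) (A.sum_mem fun j hj => ?_)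
    have hji := mem_range.1 hj
    exact A.mul_mem (ih j hji (hji.le.trans hik)) (hN i j hji)

end NewtonBasis

theorem stmt8_general {R K : Type} [CommRing R] [IsDomain R] [UniqueFactorizationMonoid R]
    [Field K] [Algebra R K] [IsFractionRing R K]
    (S : Set R) (π : R) (hπ : Irreducible π)
    (b : ℕ → R) (hbS : ∀ i, b i ∈ S) (hbdist : ∀ i j, i ≠ j → b i ≠ b j)
    (hπseq : ∀ k, 0 < k → ∀ s ∈ S,
      InLocAt π ((∏ i ∈ range k, (algebraMap R K s - algebraMap R K (b i))) /
        (∏ i ∈ range k, (algebraMap R K (b k) - algebraMap R K (b i)))))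
    (k : ℕ) (f : Polynomial K) (c : ℕ → K)
    (hrep : f = ∑ j ∈ range (k + 1),
      Polynomial.C (c j) *
        (Polynomial.C ((∏ i ∈ range j, (algebraMap R K (b j) - algebraMap R K (b i)))⁻¹) *
          ∏ i ∈ range j, (Polynomial.X - Polynomial.C (algebraMap R K (b i))))) :
    ((∀ s ∈ S, InLocAt π (f.eval (algebraMap R K s))) ↔
      (∀ i ≤ k, InLocAt π (f.eval (algebraMap R K (b i))))) ∧
    ((∀ i ≤ k, InLocAt π (f.eval (algebraMap R K (b i)))) ↔
      (∀ j ≤ k, InLocAt π (c j))) := by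
  set A := inLocAtSubring (K := K) hπ.prime
  set β : ℕ → K := fun i => algebraMap R K (b i)
  have hβ : Function.Injective β := (IsFractionRing.injective R K).comp
    fun i j h => by_contra fun hij => hbdist i j hij h
  have hbasis : ∀ j, ∀ s ∈ S, (newtonBasis β j).eval (algebraMap R K s) ∈ A := by
    intro j s hs
    rcases Nat.eq_zero_or_pos j with rfl | hj
    · simp [newtonBasis]
    · rw [mem_inLocAtSubring, eval_newtonBasis, ← div_eq_inv_mul]
      exact hπseq j hj s hs
  have hcoeff_to_S : (∀ j ≤ k, c j ∈ A) → ∀ s ∈ S, f.eval (algebraMap R K s) ∈ A :=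
    fun hc s hs => hrep ▸ eval_sum_newtonBasis_mem A (fun j _ => hbasis j s hs) hc
  have hnodes_to_coeff : (∀ i ≤ k, f.eval (β i) ∈ A) → ∀ j ≤ k, c j ∈ A :=
    fun hv => coeff_mem_of_eval_node_mem A hβ (fun i j _ => hbasis j (b i) (hbS i)) (hrep ▸ hv)
  exact ⟨⟨fun h i _ => h _ (hbS i), fun h => hcoeff_to_S (hnodes_to_coeff h)⟩,
    ⟨hnodes_to_coeff, fun hc i _ => hcoeff_to_S hc _ (hbS i)⟩⟩

/-- let {b_i} ⊆ S be a π-sequence (pairwise distinct), and let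
f = Σ_{j≤k} c_j · (x−b₀)⋯(x−b_{j−1})/((b_j−b₀)⋯(b_j−b_{j−1})) have degree ≤ k.
Then f ∈ Int(S, R_(π)) iff f(b_i) ∈ R_(π) for 0 ≤ i ≤ k, iff all c_j ∈ R_(π). -/
theorem stmt8 {R K : Type} [CommRing R] [IsDomain R] [UniqueFactorizationMonoid R]
    [Field K] [Algebra R K] [IsFractionRing R K]
    (S : Set R) (π : R) (hπ : Irreducible π)
    (b : ℕ → R) (hbS : ∀ i, b i ∈ S) (hbdist : ∀ i j, i ≠ j → b i ≠ b j)
    (hπseq : ∀ k, 0 < k → ∀ s ∈ S,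
      InLocAt π ((∏ i ∈ range k, (algebraMap R K s - algebraMap R K (b i))) /
        (∏ i ∈ range k, (algebraMap R K (b k) - algebraMap R K (b i)))))
    (k : ℕ) (f : Polynomial K) (hdeg : f.natDegree ≤ k) (c : ℕ → K)
    (hrep : f = ∑ j ∈ range (k + 1),
      Polynomial.C (c j) *
        (Polynomial.C ((∏ i ∈ range j, (algebraMap R K (b j) - algebraMap R K (b i)))⁻¹) *
          ∏ i ∈ range j, (Polynomial.X - Polynomial.C (algebraMap R K (b i))))) :
    ((∀ s ∈ S, InLocAt π (f.eval (algebraMap R K s))) ↔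
      (∀ i ≤ k, InLocAt π (f.eval (algebraMap R K (b i))))) ∧
    ((∀ i ≤ k, InLocAt π (f.eval (algebraMap R K (b i)))) ↔
      (∀ j ≤ k, InLocAt π (c j))) :=
  stmt8_general S π hπ b hbS hbdist hπseq k f c hrep
end

section
/- The sequence (0,0),(1,0),(0,1),(2,0),(1,1),(0,2),(3,0),(2,1),(1,2),(0,3) in ℤ² has the property that for every polynomial F ∈ ℚ[x,y] of total degree ≤ 3, if F takes integer values at these ten points then F takes integer values at every point of ℤ². (These points form a d-sequence of length 9 for every d ∈ ℤ for the set ℤ².) -/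
/-!
Newton interpolation in two variables: a polynomial of total degree at most 3 satisfies
`F(x, y) = ∑_{i + j ≤ 3} C(x, i) C(y, j) Δₓⁱ Δᵧʲ F(0, 0)`, and the mixed forward differences
`Δₓⁱ Δᵧʲ F(0, 0)` are integer combinations of the values of `F` at the points `(k, l)` with
`k ≤ i`, `l ≤ j`, which are among the ten given points. Since the generalized binomial
coefficients `C(a, i)` of integers are integers, `F(a, b)` is an integer.
-/

open MvPolynomial Finset

def lowerTriangle (n : ℕ) : Finset (ℕ × ℕ) :=
  (range (n + 1) ×ˢ range (n + 1)).filter fun p => p.1 + p.2 ≤ n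

lemma mem_lowerTriangle {n : ℕ} {p : ℕ × ℕ} : p ∈ lowerTriangle n ↔ p.1 + p.2 ≤ n := by
  simp only [lowerTriangle, mem_filter, mem_product, mem_range, and_iff_right_iff_imp]
  omega

noncomputable def exponent₂ (p : ℕ × ℕ) : Fin 2 →₀ ℕ :=
  Finsupp.single 0 p.1 + Finsupp.single 1 p.2

@[simp] lemma exponent₂_zero (p : ℕ × ℕ) : exponent₂ p 0 = p.1 := by simp [exponent₂]
@[simp] lemma exponent₂_one (p : ℕ × ℕ) : exponent₂ p 1 = p.2 := by simp [exponent₂]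

lemma exponent₂_injective : Function.Injective exponent₂ := fun p q h =>
  Prod.ext (by simpa using DFunLike.congr_fun h 0) (by simpa using DFunLike.congr_fun h 1)

lemma support_subset_image_exponent₂ {R : Type*} [CommSemiring R] {F : MvPolynomial (Fin 2) R}
    {n : ℕ} (hF : F.totalDegree ≤ n) : F.support ⊆ (lowerTriangle n).image exponent₂ := by
  intro d hd
  refine mem_image.2 ⟨(d 0, d 1), mem_lowerTriangle.2 ?_, ?_⟩
  · have := (le_totalDegree hd).trans hF
    rwa [Finsupp.sum_fintype _ _ (fun _ => rfl), Fin.sum_univ_two] at this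
  · ext i; fin_cases i <;> simp

lemma eval_eq_sum_lowerTriangle {R : Type*} [CommSemiring R] {F : MvPolynomial (Fin 2) R}
    {n : ℕ} (hF : F.totalDegree ≤ n) (x y : R) :
    eval ![x, y] F = ∑ p ∈ lowerTriangle n, F.coeff (exponent₂ p) * (x ^ p.1 * y ^ p.2) := by
  rw [eval_eq', sum_subset (support_subset_image_exponent₂ hF)
    (fun d _ hd => by rw [notMem_support_iff.1 hd, zero_mul]),
    sum_image (fun p _ q _ h => exponent₂_injective h)]
  simp [Fin.prod_univ_two]

/-- The mixed forward difference `Δₓⁱ Δᵧʲ f (0, 0)`. -/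
def mixedFwdDiff {R : Type*} [CommRing R] (f : ℕ → ℕ → R) (i j : ℕ) : R :=
  ∑ k ∈ range (i + 1), ∑ l ∈ range (j + 1),
    (-1) ^ (i + j + k + l) * i.choose k * j.choose l * f k l

open Polynomial in
lemma Ring.choose_two_eq {K : Type*} [Field K] [CharZero K] (x : K) :
    Ring.choose x 2 = x * (x - 1) / 2 := by
  simp only [Ring.choose_eq_smul, descPochhammer_succ_right, descPochhammer_zero, smeval_mul,
    smeval_sub, smeval_X, smeval_natCast, smeval_one, Nat.factorial, pow_zero, pow_one,
    nsmul_eq_mul, smul_eq_mul]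
  push_cast
  ring

open Polynomial in
lemma Ring.choose_three_eq {K : Type*} [Field K] [CharZero K] (x : K) :
    Ring.choose x 3 = x * (x - 1) * (x - 2) / 6 := by
  simp only [Ring.choose_eq_smul, descPochhammer_succ_right, descPochhammer_zero, smeval_mul,
    smeval_sub, smeval_X, smeval_natCast, smeval_one, Nat.factorial, pow_zero, pow_one,
    nsmul_eq_mul, smul_eq_mul]
  push_cast
  ring

lemma sum_lowerTriangle_three {M : Type*} [AddCommMonoid M] (g : ℕ × ℕ → M) :
    ∑ p ∈ lowerTriangle 3, g p = g (0, 0) + g (1, 0) + g (0, 1) + g (2, 0) + g (1, 1) + g (0, 2)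
      + g (3, 0) + g (2, 1) + g (1, 2) + g (0, 3) := by
  rw [show lowerTriangle 3 =
      {(0, 0), (1, 0), (0, 1), (2, 0), (1, 1), (0, 2), (3, 0), (2, 1), (1, 2), (0, 3)} by decide]
  simp [add_assoc]

lemma eval_eq_sum_choose_mul_mixedFwdDiff {K : Type*} [Field K] [CharZero K]
    {F : MvPolynomial (Fin 2) K} (hF : F.totalDegree ≤ 3) (x y : K) :
    eval ![x, y] F = ∑ p ∈ lowerTriangle 3, Ring.choose x p.1 * Ring.choose y p.2 *
      mixedFwdDiff (fun k l => eval ![(k : K), (l : K)] F) p.1 p.2 := by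
  simp only [mixedFwdDiff, eval_eq_sum_lowerTriangle hF, sum_lowerTriangle_three, sum_range_succ,
    sum_range_zero, Nat.choose_self, Nat.choose_zero_right, Nat.choose_one_right,
    Nat.choose_succ_self_right, Ring.choose_zero_right, Ring.choose_one_right, Ring.choose_two_eq,
    Ring.choose_three_eq]
  push_cast
  ring

lemma mixedFwdDiff_mem {R : Type*} [CommRing R] (S : Subring R) {f : ℕ → ℕ → R} {i j : ℕ}
    (hf : ∀ k ≤ i, ∀ l ≤ j, f k l ∈ S) : mixedFwdDiff f i j ∈ S := by
  refine sum_mem fun k hk => sum_mem fun l hl => S.mul_mem ?_ (hf k ?_ l ?_)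
  · exact S.mul_mem (S.mul_mem (S.pow_mem (S.neg_mem S.one_mem) _) (natCast_mem S _))
      (natCast_mem S _)
  · exact Nat.lt_succ_iff.1 (mem_range.1 hk)
  · exact Nat.lt_succ_iff.1 (mem_range.1 hl)

lemma Ring.choose_intCast_mem_range (a : ℤ) (k : ℕ) :
    Ring.choose (a : ℚ) k ∈ (Int.castRingHom ℚ).range :=
  ⟨Ring.choose a k, Ring.map_choose (Int.castRingHom ℚ) a k⟩

/-- any F ∈ ℚ[x,y] of total degree ≤ 3 which is integer-valued at the ten
points (0,0),(1,0),(0,1),(2,0),(1,1),(0,2),(3,0),(2,1),(1,2),(0,3) is integer-valued on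
all of ℤ². -/
theorem stmt9 (F : MvPolynomial (Fin 2) ℚ) (hdeg : F.totalDegree ≤ 3)
    (hpts : ∀ p ∈ ([(0,0),(1,0),(0,1),(2,0),(1,1),(0,2),(3,0),(2,1),(1,2),(0,3)] :
        List (ℤ × ℤ)), ∃ m : ℤ, MvPolynomial.eval ![(p.1 : ℚ), (p.2 : ℚ)] F = (m : ℚ)) :
    ∀ a b : ℤ, ∃ m : ℤ, MvPolynomial.eval ![(a : ℚ), (b : ℚ)] F = (m : ℚ) := by
  have hnodes : ∀ p ∈ lowerTriangle 3, ((p.1 : ℤ), (p.2 : ℤ)) ∈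
      ([(0,0),(1,0),(0,1),(2,0),(1,1),(0,2),(3,0),(2,1),(1,2),(0,3)] : List (ℤ × ℤ)) := by
    decide
  intro a b
  suffices eval ![(a : ℚ), (b : ℚ)] F ∈ (Int.castRingHom ℚ).range by
    obtain ⟨m, hm⟩ := this
    exact ⟨m, hm.symm⟩
  rw [eval_eq_sum_choose_mul_mixedFwdDiff hdeg]
  refine sum_mem fun p hp => Subring.mul_mem _ (Subring.mul_mem _
    (Ring.choose_intCast_mem_range a _) (Ring.choose_intCast_mem_range b _)) ?_
  refine mixedFwdDiff_mem _ fun k hk l hl => ?_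
  have hkl : (k, l) ∈ lowerTriangle 3 :=
    mem_lowerTriangle.2 ((add_le_add hk hl).trans (mem_lowerTriangle.1 hp))
  obtain ⟨m, hm⟩ := hpts _ (hnodes _ hkl)
  exact ⟨m, by simpa using hm.symm⟩
end

section
/- Let a₀,…,a_r be distinct elements of ℤ and f = g/d ∈ ℚ[x] with g ∈ ℤ[x], d ∈ ℤ nonzero, deg f ≤ r. If a₀,…,a_r form a d-sequence for S ⊆ ℤ (i.e., for each prime p | d, a_i ≡ u_i mod p^{e+1} where {u_i} is a p-sequence of S and p^e is the p-adic valuation of the associated factorial product), then f ∈ Int(S,ℤ) if and only if f(a_i) ∈ ℤ for all 0 ≤ i ≤ r. -/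
/-! For a prime `p ∣ d` with p-sequence `u`, expand `g` in the Newton basis
`N_j = ∏_{i<j} (X - u_i)`, say `g = ∑_{j ≤ r} c_j N_j`. On `S` each `N_j` is divisible by
`p^{e_j}`, while the congruences `a_i ≡ u_i (mod p^{e_r+1})` make `N_j(a_k)` have valuation
exactly `e_k` for `j = k` and at least `e_j + 1` for `j > k`. Triangularity then shows that
`p^v` divides `g` on all of `S`, and also on `a_0, …, a_r`, exactly when `p^v ∣ c_j p^{e_j}`
for every `j ≤ r`. Divisibility by `d` is checked one prime power at a time. -/

open Finset

/-- A p-sequence {u_i} of S ⊆ ℤ: pairwise distinct elements of S such that for every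
k > 0 the Newton quotient (x−u₀)⋯(x−u_{k−1})/((u_k−u₀)⋯(u_k−u_{k−1})) maps S into
ℤ_(p); equivalently p^{e_k} divides (s−u₀)⋯(s−u_{k−1}) for every s ∈ S, where p^{e_k}
is the exact p-part of (u_k−u₀)⋯(u_k−u_{k−1}). -/
def IsPSeqInt (p : ℕ) (S : Set ℤ) (u : ℕ → ℤ) : Prop :=
  (∀ i, u i ∈ S) ∧ (∀ i j, i < j → u i ≠ u j) ∧
  ∀ k, 0 < k → ∀ s ∈ S,
    (p : ℤ) ^ (padicValInt p (∏ i ∈ range k, (u k - u i))) ∣ ∏ i ∈ range k, (s - u i)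

/-- a₀,…,a_r is a d-sequence for S: for each prime p ∣ d there is a p-sequence {u_i}
of S with a_i ≡ u_i (mod p^{e_r+1}), where p^{e_r} is the p-part of
(u_r−u₀)⋯(u_r−u_{r−1}). -/
def IsDSeqInt (d : ℤ) (S : Set ℤ) (r : ℕ) (a : ℕ → ℤ) : Prop :=
  ∀ p : ℕ, p.Prime → (p : ℤ) ∣ d →
    ∃ u : ℕ → ℤ, IsPSeqInt p S u ∧
      ∀ i ≤ r, (p : ℤ) ^ (padicValInt p (∏ j ∈ range r, (u r - u j)) + 1) ∣ (a i - u i)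

open Polynomial

theorem Polynomial.exists_eq_sum_C_mul_prod_X_sub_C {R : Type*} [CommRing R] (u : ℕ → R)
    (r : ℕ) (g : R[X]) (hg : g.natDegree ≤ r) :
    ∃ c : ℕ → R, g = ∑ j ∈ range (r + 1), C (c j) * ∏ i ∈ range j, (X - C (u i)) := by
  induction r generalizing u g with
  | zero => exact ⟨fun _ => g.coeff 0, by simpa using eq_C_of_natDegree_le_zero hg⟩
  | succ r ih =>
    have hq : (g /ₘ (X - C (u 0))).natDegree ≤ r := by
      nontriviality R
      rw [natDegree_divByMonic _ (monic_X_sub_C _), natDegree_X_sub_C]; omega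
    obtain ⟨c, hc⟩ := ih (fun i => u (i + 1)) _ hq
    refine ⟨Nat.rec (g.eval (u 0)) fun j _ => c j, ?_⟩
    conv_lhs => rw [← modByMonic_add_div g (X - C (u 0)), modByMonic_X_sub_C_eq_C_eval, hc]
    rw [sum_range_succ' _ (r + 1), mul_sum]
    simp only [prod_range_succ', prod_range_zero, mul_one, add_comm (C _)]
    exact congrArg₂ (· + ·) (sum_congr rfl fun j _ => by ring) rfl

theorem Finset.sub_dvd_prod_sub_sub_prod_sub {ι R : Type*} [CommRing R] (s : Finset ι)
    (v : ι → R) (x y : R) : x - y ∣ ∏ i ∈ s, (x - v i) - ∏ i ∈ s, (y - v i) := by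
  have h := sub_dvd_eval_sub x y (∏ i ∈ s, (X - C (v i)))
  rw [eval_prod, eval_prod] at h
  simpa only [eval_sub, eval_X, eval_C] using h

theorem Int.dvd_iff_prime_pow_dvd_dvd {d y : ℤ} :
    d ∣ y ↔ ∀ p : ℕ, p.Prime → (p : ℤ) ∣ d → ∀ v, (p : ℤ) ^ v ∣ d → (p : ℤ) ^ v ∣ y := by
  refine ⟨fun h _ _ _ _ hv => hv.trans h, fun h => ?_⟩
  rw [← Int.natAbs_dvd_natAbs, Nat.dvd_iff_prime_pow_dvd_dvd]
  intro p v hp hpv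
  rcases v.eq_zero_or_pos with rfl | hv
  · simp
  have hpvd : (p : ℤ) ^ v ∣ d := by exact_mod_cast Int.natCast_dvd.mpr hpv
  have hpd : (p : ℤ) ∣ d := (dvd_pow_self _ hv.ne').trans hpvd
  exact_mod_cast Int.natCast_dvd.mp (h p hp hpd v hpvd)

theorem Int.exists_intCast_eq_inv_mul_iff {d y : ℤ} (hd : d ≠ 0) :
    (∃ m : ℤ, (d : ℚ)⁻¹ * y = m) ↔ d ∣ y := by
  have hdQ : (d : ℚ) ≠ 0 := by exact_mod_cast hd
  refine ⟨fun ⟨m, hm⟩ => ⟨m, ?_⟩, fun ⟨m, hm⟩ => ⟨m, ?_⟩⟩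
  · rw [inv_mul_eq_iff_eq_mul₀ hdQ] at hm
    exact_mod_cast hm
  · rw [hm]
    push_cast
    field_simp

/-- The exponent `e_k` of the p-sequence `u`. -/
noncomputable abbrev pSeqExp (p : ℕ) (u : ℕ → ℤ) (k : ℕ) : ℕ :=
  padicValInt p (∏ i ∈ range k, (u k - u i))

namespace IsPSeqInt

variable {p : ℕ} {S : Set ℤ} {u : ℕ → ℤ}

theorem prod_sub_ne_zero (hu : IsPSeqInt p S u) (k : ℕ) : ∏ i ∈ range k, (u k - u i) ≠ 0 :=
  prod_ne_zero_iff.mpr fun i hi => sub_ne_zero.mpr (hu.2.1 i k (mem_range.mp hi)).symm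

theorem pow_dvd_prod_sub (hu : IsPSeqInt p S u) (k : ℕ) {s : ℤ} (hs : s ∈ S) :
    (p : ℤ) ^ pSeqExp p u k ∣ ∏ i ∈ range k, (s - u i) := by
  rcases k.eq_zero_or_pos with rfl | hk
  · simp [pSeqExp]
  · exact hu.2.2 k hk s hs

theorem pow_dvd_prod_sub_of_dvd_sub (hu : IsPSeqInt p S u) {j : ℕ} {s x : ℤ} (hs : s ∈ S)
    (hx : (p : ℤ) ^ pSeqExp p u j ∣ x - s) :
    (p : ℤ) ^ pSeqExp p u j ∣ ∏ i ∈ range j, (x - u i) :=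
  (dvd_sub_left (hu.pow_dvd_prod_sub j hs)).mp (hx.trans (sub_dvd_prod_sub_sub_prod_sub _ _ _ _))

variable [Fact p.Prime]

theorem pSeqExp_mono (hu : IsPSeqInt p S u) : Monotone (pSeqExp p u) := by
  refine monotone_nat_of_le_succ fun k => ?_
  have h : (p : ℤ) ^ pSeqExp p u k ∣ ∏ i ∈ range (k + 1), (u (k + 1) - u i) := by
    rw [prod_range_succ]
    exact (hu.pow_dvd_prod_sub k (hu.1 _)).mul_right _
  exact ((padicValInt_dvd_iff _ _).mp h).resolve_left (hu.prod_sub_ne_zero _)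

theorem pow_dvd_mul_pow_of_pow_dvd_mul_prod (hu : IsPSeqInt p S u) {k n : ℕ} {x c : ℤ}
    (hx : (p : ℤ) ^ (pSeqExp p u k + 1) ∣ x - u k)
    (h : (p : ℤ) ^ n ∣ c * ∏ i ∈ range k, (x - u i)) :
    (p : ℤ) ^ n ∣ c * (p : ℤ) ^ pSeqExp p u k := by
  obtain ⟨m, hm⟩ := padicValInt_dvd (p := p) (∏ i ∈ range k, (u k - u i))
  have hpm : ¬ (p : ℤ) ∣ m := by
    rintro ⟨t, rfl⟩
    have h' : (p : ℤ) ^ (pSeqExp p u k + 1) ∣ ∏ i ∈ range k, (u k - u i) :=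
      ⟨t, by rw [hm, pow_succ, mul_assoc]⟩
    exact Nat.not_succ_le_self _
      (((padicValInt_dvd_iff _ _).mp h').resolve_left (hu.prod_sub_ne_zero k))
  obtain ⟨t, ht⟩ := hx.trans (sub_dvd_prod_sub_sub_prod_sub (range k) u x (u k))
  have hN : ∏ i ∈ range k, (x - u i) = (p : ℤ) ^ pSeqExp p u k * (m + p * t) := by
    rw [mul_add, ← hm, ← mul_assoc, ← pow_succ, ← ht]
    ring
  have hcop : IsCoprime ((p : ℤ) ^ n) (m + p * t) := by
    refine IsCoprime.pow_left ((Prime.coprime_iff_not_dvd ?_).mpr fun hd => hpm ?_)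
    · exact Nat.prime_iff_prime_int.mp Fact.out
    · exact (dvd_add_left (dvd_mul_right _ _)).mp hd
  rw [hN, ← mul_assoc] at h
  exact hcop.dvd_of_dvd_mul_right h

theorem pow_dvd_coeff_mul_of_pow_dvd_sum (hu : IsPSeqInt p S u) {r v : ℕ} {a c : ℕ → ℤ}
    (ha : ∀ i ≤ r, (p : ℤ) ^ (pSeqExp p u r + 1) ∣ a i - u i)
    (h : ∀ m ≤ r, (p : ℤ) ^ v ∣ ∑ j ∈ range (r + 1), c j * ∏ i ∈ range j, (a m - u i)) :
    ∀ k ≤ r, (p : ℤ) ^ v ∣ c k * (p : ℤ) ^ pSeqExp p u k := by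
  -- Induction on `v`, then strong induction on `k`: evaluated at `a k`, the terms `j < k` are
  -- divisible by `p^(v+1)` by the inner hypothesis, the terms `j > k` by the outer one and the
  -- factor `a k - u k`, so the diagonal term is too.
  induction v with
  | zero => simp
  | succ v ihv =>
    have hv := ihv fun m hm => (pow_dvd_pow _ v.le_succ).trans (h m hm)
    intro k
    induction k using Nat.strong_induction_on with
    | _ k ihk =>
    intro hk
    have hak : (p : ℤ) ^ (pSeqExp p u k + 1) ∣ a k - u k :=
      (pow_dvd_pow _ (Nat.succ_le_succ (hu.pSeqExp_mono hk))).trans (ha k hk)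
    refine hu.pow_dvd_mul_pow_of_pow_dvd_mul_prod hak ?_
    have hoff : ∀ j ∈ (range (r + 1)).erase k,
        (p : ℤ) ^ (v + 1) ∣ c j * ∏ i ∈ range j, (a k - u i) := by
      intro j hj
      obtain ⟨hjk, hjr⟩ := mem_erase.mp hj
      replace hjr : j ≤ r := Nat.lt_succ_iff.mp (mem_range.mp hjr)
      rcases hjk.lt_or_gt with hlt | hlt
      · refine (ihk j hlt hjr).trans (mul_dvd_mul_left _ (hu.pow_dvd_prod_sub_of_dvd_sub (hu.1 k) ?_))
        exact (pow_dvd_pow _ ((hu.pSeqExp_mono hlt.le).trans (Nat.le_succ _))).trans hak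
      · have hN : (p : ℤ) ^ (pSeqExp p u j + 1) ∣ ∏ i ∈ range j, (a k - u i) :=
          ((pow_dvd_pow _ (Nat.succ_le_succ (hu.pSeqExp_mono hjr))).trans (ha k hk)).trans
            (dvd_prod_of_mem _ (mem_range.mpr hlt))
        calc (p : ℤ) ^ (v + 1) = (p : ℤ) ^ v * p := pow_succ _ _
          _ ∣ c j * (p : ℤ) ^ pSeqExp p u j * p := mul_dvd_mul_right (hv j hjr) _
          _ = c j * (p : ℤ) ^ (pSeqExp p u j + 1) := by ring
          _ ∣ c j * ∏ i ∈ range j, (a k - u i) := mul_dvd_mul_left _ hN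
    have hsum := add_sum_erase (range (r + 1)) (fun j => c j * ∏ i ∈ range j, (a k - u i))
      (mem_range.mpr (Nat.lt_succ_of_le hk))
    exact (dvd_add_left (dvd_sum hoff)).mp (hsum ▸ h k hk)

theorem forall_pow_dvd_eval_iff (hu : IsPSeqInt p S u) {r : ℕ} {a : ℕ → ℤ}
    (ha : ∀ i ≤ r, (p : ℤ) ^ (pSeqExp p u r + 1) ∣ a i - u i) {g : ℤ[X]}
    (hg : g.natDegree ≤ r) (v : ℕ) :
    (∀ s ∈ S, (p : ℤ) ^ v ∣ g.eval s) ↔ ∀ i ≤ r, (p : ℤ) ^ v ∣ g.eval (a i) := by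
  obtain ⟨c, rfl⟩ := exists_eq_sum_C_mul_prod_X_sub_C u r g hg
  simp only [eval_finsetSum, eval_mul, eval_C, eval_prod, eval_sub, eval_X]
  have of_coeff (hc : ∀ j ≤ r, (p : ℤ) ^ v ∣ c j * (p : ℤ) ^ pSeqExp p u j) (x : ℤ)
      (hx : ∀ j ≤ r, (p : ℤ) ^ pSeqExp p u j ∣ ∏ i ∈ range j, (x - u i)) :
      (p : ℤ) ^ v ∣ ∑ j ∈ range (r + 1), c j * ∏ i ∈ range j, (x - u i) :=
    dvd_sum fun j hj =>
      have hjr := Nat.lt_succ_iff.mp (mem_range.mp hj)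
      (hc j hjr).trans (mul_dvd_mul_left _ (hx j hjr))
  constructor
  · intro hS i hi
    have hc := hu.pow_dvd_coeff_mul_of_pow_dvd_sum (a := u) (fun i _ => by simp)
      fun m _ => hS _ (hu.1 m)
    refine of_coeff hc (a i) fun j hj => hu.pow_dvd_prod_sub_of_dvd_sub (hu.1 i) ?_
    exact (pow_dvd_pow _ ((hu.pSeqExp_mono hj).trans (Nat.le_succ _))).trans (ha i hi)
  · intro hA s hs
    exact of_coeff (hu.pow_dvd_coeff_mul_of_pow_dvd_sum ha hA) s fun j _ => hu.pow_dvd_prod_sub j hs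

end IsPSeqInt

theorem IsDSeqInt.forall_dvd_eval_iff {d : ℤ} {S : Set ℤ} {r : ℕ} {a : ℕ → ℤ}
    (hseq : IsDSeqInt d S r a) {g : ℤ[X]} (hg : g.natDegree ≤ r) :
    (∀ s ∈ S, d ∣ g.eval s) ↔ ∀ i ≤ r, d ∣ g.eval (a i) := by
  have hloc : ∀ p : ℕ, p.Prime → (p : ℤ) ∣ d → ∀ v,
      (∀ s ∈ S, (p : ℤ) ^ v ∣ g.eval s) ↔ ∀ i ≤ r, (p : ℤ) ^ v ∣ g.eval (a i) := by
    intro p hp hpd v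
    have := Fact.mk hp
    obtain ⟨u, hu, hau⟩ := hseq p hp hpd
    exact hu.forall_pow_dvd_eval_iff hau hg v
  simp only [Int.dvd_iff_prime_pow_dvd_dvd (d := d)]
  exact ⟨fun h i hi p hp hpd v hv => (hloc p hp hpd v).mp (fun s hs => h s hs p hp hpd v hv) i hi,
    fun h s hs p hp hpd v hv => (hloc p hp hpd v).mpr (fun i hi => h i hi p hp hpd v hv) s hs⟩

theorem stmt11_general (S : Set ℤ) (d : ℤ) (hd : d ≠ 0) (g : Polynomial ℤ) (r : ℕ)
    (a : ℕ → ℤ)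
    (hseq : IsDSeqInt d S r a)
    (f : Polynomial ℚ)
    (hfdef : f = Polynomial.C ((d : ℚ))⁻¹ * g.map (Int.castRingHom ℚ))
    (hdeg : f.natDegree ≤ r) :
    (∀ s ∈ S, ∃ m : ℤ, f.eval (s : ℚ) = (m : ℚ)) ↔
    (∀ i ≤ r, ∃ m : ℤ, f.eval ((a i : ℤ) : ℚ) = (m : ℚ)) := by
  have hdQ : (d : ℚ) ≠ 0 := Int.cast_ne_zero.mpr hd
  have hg : g.natDegree ≤ r := by
    rwa [hfdef, natDegree_C_mul (inv_ne_zero hdQ),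
      natDegree_map_eq_of_injective (RingHom.injective_int _)] at hdeg
  have hint (x : ℤ) : (∃ m : ℤ, f.eval (x : ℚ) = m) ↔ d ∣ g.eval x := by
    rw [hfdef, eval_mul, eval_C, eval_intCast_map, eq_intCast]
    exact Int.exists_intCast_eq_inv_mul_iff hd
  simp only [hint]
  exact hseq.forall_dvd_eval_iff hg

/-- if a₀,…,a_r are distinct and form a d-sequence for S ⊆ ℤ and
f = g/d ∈ ℚ[x] has degree ≤ r, then f ∈ Int(S,ℤ) iff f(a_i) ∈ ℤ for 0 ≤ i ≤ r. -/
theorem stmt11 (S : Set ℤ) (d : ℤ) (hd : d ≠ 0) (g : Polynomial ℤ) (r : ℕ)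
    (a : ℕ → ℤ) (hdist : ∀ i j, i ≤ r → j ≤ r → i ≠ j → a i ≠ a j)
    (hseq : IsDSeqInt d S r a)
    (f : Polynomial ℚ)
    (hfdef : f = Polynomial.C ((d : ℚ))⁻¹ * g.map (Int.castRingHom ℚ))
    (hdeg : f.natDegree ≤ r) :
    (∀ s ∈ S, ∃ m : ℤ, f.eval (s : ℚ) = (m : ℚ)) ↔
    (∀ i ≤ r, ∃ m : ℤ, f.eval ((a i : ℤ) : ℚ) = (m : ℚ)) :=
  stmt11_general S d hd g r a hseq f hfdef hdeg
end

section
/- For n = 2, m = (2,2), and S = ℤ×ℤ, the nine points (0,0),(1,0),(0,1),(2,0),(1,1),(0,2),(2,1),(1,2),(2,2) have the property that any polynomial F ∈ ℚ[x,y] with deg_x F ≤ 2 and deg_y F ≤ 2 taking integer values at these nine points takes integer values on all of ℤ². In particular they form a d_{(2,2)}-sequence of length 8 for every d ∈ ℤ. -/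
/-!
Newton interpolation: a quadratic `q` satisfies
`q a = q 0 + (q 1 - q 0) a + (q 2 - 2 q 1 + q 0) a (a - 1) / 2`, and `a (a - 1) / 2` is an integer
for `a ∈ ℤ`, so a quadratic polynomial with integer values at `0, 1, 2` is integer-valued on `ℤ`.
Applying this first in `x` on each of the rows `y = 0, 1, 2`, then in `y`, settles the
two-variable case.
-/

open MvPolynomial Finset

theorem MvPolynomial.eval_fin_two_eq_sum_of_degreeOf_le {R : Type*} [CommSemiring R]
    {F : MvPolynomial (Fin 2) R} {d e : ℕ} (hd : F.degreeOf 0 ≤ d) (he : F.degreeOf 1 ≤ e)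
    (x y : R) :
    eval ![x, y] F = ∑ i ∈ range (d + 1), ∑ j ∈ range (e + 1),
      F.coeff (Finsupp.single 0 i + Finsupp.single 1 j) * x ^ i * y ^ j := by
  have hsupp : F.support ⊆ (range (d + 1) ×ˢ range (e + 1)).image
      fun p : ℕ × ℕ => Finsupp.single 0 p.1 + Finsupp.single 1 p.2 := by
    intro m hm
    have h0 : m 0 < d + 1 := (degreeOf_lt_iff d.succ_pos).1 (Nat.lt_succ_of_le hd) m hm
    have h1 : m 1 < e + 1 := (degreeOf_lt_iff e.succ_pos).1 (Nat.lt_succ_of_le he) m hm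
    refine mem_image.2 ⟨(m 0, m 1), by simp [h0, h1], ?_⟩
    ext k
    fin_cases k <;> simp
  have hinj : Set.InjOn (fun p : ℕ × ℕ => Finsupp.single (0 : Fin 2) p.1 + Finsupp.single 1 p.2)
      ↑(range (d + 1) ×ˢ range (e + 1)) := by
    intro p _ q _ h
    exact Prod.ext (by simpa using DFunLike.congr_fun h 0) (by simpa using DFunLike.congr_fun h 1)
  rw [eval_eq', ← sum_product', sum_subset hsupp fun m _ hm => by simp [notMem_support_iff.1 hm],
    sum_image hinj]
  refine sum_congr rfl fun p _ => ?_
  simp [Fin.prod_univ_two, mul_assoc]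

def IsQuadratic {R : Type*} [CommSemiring R] (q : R → R) : Prop :=
  ∃ c : ℕ → R, ∀ t, q t = ∑ i ∈ range 3, c i * t ^ i

section Quadratic

variable {K : Type*} [Field K]

theorem IsQuadratic.eq_newton [CharZero K] {q : K → K} (hq : IsQuadratic q) (t : K) :
    q t = q 0 + (q 1 - q 0) * t + (q 2 - 2 * q 1 + q 0) * (t * (t - 1) / 2) := by
  obtain ⟨c, hc⟩ := hq
  simp only [hc, sum_range_succ, sum_range_zero]
  field_simp
  ring

theorem intCast_mul_sub_one_div_two_mem_bot [CharZero K] (a : ℤ) :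
    (a : K) * (a - 1) / 2 ∈ (⊥ : Subring K) := by
  obtain ⟨k, hk⟩ := Int.even_mul_pred_self a
  refine Subring.mem_bot.2 ⟨k, ?_⟩
  have hkK : (a : K) * (a - 1) = k + k := by exact_mod_cast hk
  rw [hkK]
  ring

theorem IsQuadratic.intCast_mem_bot [CharZero K] {q : K → K} (hq : IsQuadratic q)
    (h : ∀ k : ℤ, 0 ≤ k → k ≤ 2 → q k ∈ (⊥ : Subring K)) (a : ℤ) :
    q a ∈ (⊥ : Subring K) := by
  have h0 : q 0 ∈ (⊥ : Subring K) := by exact_mod_cast h 0 le_rfl zero_le_two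
  have h1 : q 1 ∈ (⊥ : Subring K) := by exact_mod_cast h 1 zero_le_one one_le_two
  have h2 : q 2 ∈ (⊥ : Subring K) := by exact_mod_cast h 2 zero_le_two le_rfl
  have ha : (a : K) ∈ (⊥ : Subring K) := intCast_mem _ a
  have h2' : (2 : K) ∈ (⊥ : Subring K) := ofNat_mem _ 2
  rw [hq.eq_newton]
  exact add_mem (add_mem h0 (mul_mem (sub_mem h1 h0) ha))
    (mul_mem (add_mem (sub_mem h2 (mul_mem h2' h1)) h0) (intCast_mul_sub_one_div_two_mem_bot a))

end Quadratic

theorem MvPolynomial.isQuadratic_eval_fin_two_left {R : Type*} [CommSemiring R]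
    {F : MvPolynomial (Fin 2) R} (hdx : F.degreeOf 0 ≤ 2) (hdy : F.degreeOf 1 ≤ 2) (y : R) :
    IsQuadratic fun x => eval ![x, y] F :=
  ⟨fun i => ∑ j ∈ range 3, F.coeff (Finsupp.single 0 i + Finsupp.single 1 j) * y ^ j, fun x => by
    beta_reduce
    rw [eval_fin_two_eq_sum_of_degreeOf_le hdx hdy]
    refine sum_congr rfl fun i _ => ?_
    rw [sum_mul]
    exact sum_congr rfl fun j _ => by ring⟩

theorem MvPolynomial.isQuadratic_eval_fin_two_right {R : Type*} [CommSemiring R]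
    {F : MvPolynomial (Fin 2) R} (hdx : F.degreeOf 0 ≤ 2) (hdy : F.degreeOf 1 ≤ 2) (x : R) :
    IsQuadratic fun y => eval ![x, y] F :=
  ⟨fun j => ∑ i ∈ range 3, F.coeff (Finsupp.single 0 i + Finsupp.single 1 j) * x ^ i, fun y => by
    beta_reduce
    rw [eval_fin_two_eq_sum_of_degreeOf_le hdx hdy, sum_comm]
    refine sum_congr rfl fun j _ => ?_
    rw [sum_mul]⟩

/-- any F ∈ ℚ[x,y] with partial degrees deg_x F ≤ 2 and deg_y F ≤ 2 which
takes integer values at the nine points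
(0,0),(1,0),(0,1),(2,0),(1,1),(0,2),(2,1),(1,2),(2,2) takes integer values on all of ℤ². -/
theorem stmt15 (F : MvPolynomial (Fin 2) ℚ)
    (hdx : F.degreeOf 0 ≤ 2) (hdy : F.degreeOf 1 ≤ 2)
    (hpts : ∀ p ∈ ([(0,0),(1,0),(0,1),(2,0),(1,1),(0,2),(2,1),(1,2),(2,2)] :
        List (ℤ × ℤ)), ∃ m : ℤ, MvPolynomial.eval ![(p.1 : ℚ), (p.2 : ℚ)] F = (m : ℚ)) :
    ∀ a b : ℤ, ∃ m : ℤ, MvPolynomial.eval ![(a : ℚ), (b : ℚ)] F = (m : ℚ) := by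
  have hgrid : ∀ i j : ℤ, 0 ≤ i → i ≤ 2 → 0 ≤ j → j ≤ 2 →
      eval ![(i : ℚ), (j : ℚ)] F ∈ (⊥ : Subring ℚ) := by
    intro i j hi0 hi2 hj0 hj2
    obtain ⟨m, hm⟩ := hpts (i, j) (by interval_cases i <;> interval_cases j <;> simp)
    exact Subring.mem_bot.2 ⟨m, hm.symm⟩
  intro a b
  have hrows : ∀ j : ℤ, 0 ≤ j → j ≤ 2 → eval ![(a : ℚ), (j : ℚ)] F ∈ (⊥ : Subring ℚ) :=
    fun j hj0 hj2 => (isQuadratic_eval_fin_two_left hdx hdy (j : ℚ)).intCast_mem_bot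
      (fun i hi0 hi2 => hgrid i j hi0 hi2 hj0 hj2) a
  obtain ⟨m, hm⟩ := Subring.mem_bot.1
    ((isQuadratic_eval_fin_two_right hdx hdy (a : ℚ)).intCast_mem_bot hrows b)
  exact ⟨m, hm.symm⟩
end
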